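/- Let S = V(f) ⊂ ℙ³(ℂ) with f = w²z² + w(y³ + z·Q₂(x,y)) + H₄(x,y,z), where Q₂ = Σ_{i+j=2} q_{ij}x^i y^j and H₄ = Σ_{i+j+k=4} h_{ijk}x^i y^j z^k, satisfying h₄₀₀ = h₃₁₀ = q₂₀ = 0 and h₃₀₁ ≠ 0, and suppose O = (0:0:0:1) is an isolated point of the singular locus of S. Then the line ℓ₀ = {y = z = 0} is contained in S and is the unique line contained in S passing through O. Moreover: if h₂₂₀ ≠ 0, then no line contained in S other than ℓ₀ meets ℓ₀; if h₂₂₀ = 0, then exactly one line contained in S other than ℓ₀ meets ℓ₀, namely the line {z = 0, h₁₃₀·x + h₀₄₀·y + w = 0}. -/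
import Mathlib


open MvPolynomial

noncomputable section

abbrev P3 := Projectivization ℂ (Fin 4 → ℂ)

/-- The quotient topology on `ℙ³(ℂ)` induced from `ℂ⁴ ∖ {0}`. -/
instance : TopologicalSpace P3 :=
  inferInstanceAs (TopologicalSpace (Quotient (projectivizationSetoid ℂ (Fin 4 → ℂ))))

/-- A line in `ℙ³(ℂ)`: the projectivization of a 2-dimensional linear subspace of `ℂ⁴`. -/
def IsLine (L : Set P3) : Prop :=
  ∃ W : Submodule ℂ (Fin 4 → ℂ), Module.finrank ℂ W = 2 ∧
    L = {P : P3 | P.submodule ≤ W}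

/-- The zero set in `ℙ³(ℂ)` of a (homogeneous) polynomial. -/
def zeroSet (f : MvPolynomial (Fin 4) ℂ) : Set P3 :=
  {P | eval P.rep f = 0}

/-- `P` is a singular point of `V(f)`: `P ∈ V(f)` and all first partials vanish at `P`. -/
def IsSingPt (f : MvPolynomial (Fin 4) ℂ) (P : P3) : Prop :=
  eval P.rep f = 0 ∧ ∀ i, eval P.rep (pderiv i f) = 0

/-- `P` is an isolated point of the set `T`. -/
def IsIsolatedPtOf (P : P3) (T : Set P3) : Prop :=
  P ∈ T ∧ ∃ U : Set P3, IsOpen U ∧ P ∈ U ∧ U ∩ T = {P}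

/-- The point `O = (0:0:0:1)`. -/
def ptO : P3 :=
  Projectivization.mk ℂ ![0, 0, 0, 1] (by
    intro h
    simpa using congrFun h 3)

/-- `Q₂ = Σ_{i+j=2} q_{ij} xⁱ yʲ` built from a coefficient function `q`. -/
def quadForm (q : ℕ → ℕ → ℂ) : MvPolynomial (Fin 4) ℂ :=
  ∑ i ∈ Finset.range 3, C (q i (2 - i)) * X 0 ^ i * X 1 ^ (2 - i)

/-- `H₄ = Σ_{i+j+k=4} h_{ijk} xⁱ yʲ zᵏ` built from a coefficient function `h`. -/
def quartForm (h : ℕ → ℕ → ℕ → ℂ) : MvPolynomial (Fin 4) ℂ :=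
  ∑ i ∈ Finset.range 5, ∑ j ∈ Finset.range (5 - i),
    C (h i j (4 - i - j)) * X 0 ^ i * X 1 ^ j * X 2 ^ (4 - i - j)

/-! ### Auxiliary machinery -/

/-- The value of `f` on a vector, written out explicitly. -/
def gval (q : ℕ → ℕ → ℂ) (h : ℕ → ℕ → ℕ → ℂ) (v : Fin 4 → ℂ) : ℂ :=
  (v 3)^2 * (v 2)^2
  + v 3 * ((v 1)^3 + v 2 * (q 0 2 * (v 1)^2 + q 1 1 * (v 0) * (v 1) + q 2 0 * (v 0)^2))
  + (h 0 0 4 * (v 2)^4 + h 0 1 3 * (v 1) * (v 2)^3 + h 0 2 2 * (v 1)^2 * (v 2)^2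
     + h 0 3 1 * (v 1)^3 * (v 2) + h 0 4 0 * (v 1)^4
     + h 1 0 3 * (v 0) * (v 2)^3 + h 1 1 2 * (v 0) * (v 1) * (v 2)^2
     + h 1 2 1 * (v 0) * (v 1)^2 * (v 2) + h 1 3 0 * (v 0) * (v 1)^3
     + h 2 0 2 * (v 0)^2 * (v 2)^2 + h 2 1 1 * (v 0)^2 * (v 1) * (v 2)
     + h 2 2 0 * (v 0)^2 * (v 1)^2
     + h 3 0 1 * (v 0)^3 * (v 2) + h 3 1 0 * (v 0)^3 * (v 1)
     + h 4 0 0 * (v 0)^4)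

variable {q : ℕ → ℕ → ℂ} {h : ℕ → ℕ → ℕ → ℂ} {f : MvPolynomial (Fin 4) ℂ}

lemma eval_eq_gval
    (hf : f = X 3 ^ 2 * X 2 ^ 2 + X 3 * (X 1 ^ 3 + X 2 * quadForm q) + quartForm h)
    (v : Fin 4 → ℂ) : eval v f = gval q h v := by
  subst hf
  simp [quadForm, quartForm, Finset.sum_range_succ, gval]
  ring

lemma gval_smul (a : ℂ) (v : Fin 4 → ℂ) :
    gval q h (a • v) = a^4 * gval q h v := by
  simp only [gval, Pi.smul_apply, smul_eq_mul]; ring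

lemma mk_rep_spec (v : Fin 4 → ℂ) (hv : v ≠ 0) :
    ∃ a : ℂ, a ≠ 0 ∧ (Projectivization.mk ℂ v hv).rep = a • v := by
  obtain ⟨a, ha⟩ := Projectivization.exists_smul_eq_mk_rep ℂ v hv
  exact ⟨(a : ℂ), a.ne_zero, ha.symm⟩

lemma mk_mem_zeroSet_iff
    (hf : f = X 3 ^ 2 * X 2 ^ 2 + X 3 * (X 1 ^ 3 + X 2 * quadForm q) + quartForm h)
    (v : Fin 4 → ℂ) (hv : v ≠ 0) :
    Projectivization.mk ℂ v hv ∈ zeroSet f ↔ gval q h v = 0 := by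
  obtain ⟨a, ha, hrep⟩ := mk_rep_spec v hv
  rw [zeroSet, Set.mem_setOf_eq, eval_eq_gval hf, hrep, gval_smul]
  constructor
  · intro h0
    rcases mul_eq_zero.1 h0 with h1 | h1
    · exact absurd h1 (pow_ne_zero 4 ha)
    · exact h1
  · intro h0; rw [h0, mul_zero]

lemma lineSet_eq (W : Submodule ℂ (Fin 4 → ℂ)) :
    {P : P3 | P.submodule ≤ W} = {P : P3 | P.rep ∈ W} := by
  ext P
  rw [Set.mem_setOf_eq, Set.mem_setOf_eq, Projectivization.submodule_eq,
    Submodule.span_singleton_le_iff_mem]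

lemma finrank_span_pair {a b : Fin 4 → ℂ} (hli : LinearIndependent ℂ ![a, b]) :
    Module.finrank ℂ (Submodule.span ℂ ({a, b} : Set (Fin 4 → ℂ))) = 2 := by
  have hr : Set.range ![a, b] = {a, b} := by
    ext x; simp [Fin.exists_fin_two, or_comm]
  have := finrank_span_eq_card hli
  rw [hr] at this
  simpa using this

lemma mem_span_e (v : Fin 4 → ℂ) :
    v ∈ Submodule.span ℂ ({![1,0,0,0], ![0,0,0,1]} : Set (Fin 4 → ℂ)) ↔ v 1 = 0 ∧ v 2 = 0 := by
  rw [Submodule.mem_span_pair]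
  constructor
  · rintro ⟨m, n, rfl⟩
    constructor <;> simp
  · rintro ⟨h1, h2⟩
    refine ⟨v 0, v 3, funext fun i => ?_⟩
    fin_cases i <;> simp [h1, h2]

lemma li_e : LinearIndependent ℂ ![(![1,0,0,0] : Fin 4 → ℂ), ![0,0,0,1]] := by
  rw [LinearIndependent.pair_iff]
  intro s t hst
  exact ⟨by simpa using congrFun hst 0, by simpa using congrFun hst 3⟩

lemma mem_span_w (c d : ℂ) (v : Fin 4 → ℂ) :
    v ∈ Submodule.span ℂ ({![1,0,0,-c], ![0,1,0,-d]} : Set (Fin 4 → ℂ)) ↔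
      v 2 = 0 ∧ c * v 0 + d * v 1 + v 3 = 0 := by
  rw [Submodule.mem_span_pair]
  constructor
  · rintro ⟨m, n, rfl⟩
    constructor <;> simp <;> ring
  · rintro ⟨h2, h3⟩
    refine ⟨v 0, v 1, funext fun i => ?_⟩
    fin_cases i
    · simp
    · simp
    · simp [h2]
    · simp
      linear_combination -h3
  
lemma li_w (c d : ℂ) :
    LinearIndependent ℂ ![(![1,0,0,-c] : Fin 4 → ℂ), ![0,1,0,-d]] := by
  rw [LinearIndependent.pair_iff]
  intro s t hst
  exact ⟨by simpa using congrFun hst 0, by simpa using congrFun hst 1⟩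

/-- Every nonzero vector of the plane of a line inside `V(f)` is a zero of `g`. -/
lemma gval_zero_of_mem
    (hf : f = X 3 ^ 2 * X 2 ^ 2 + X 3 * (X 1 ^ 3 + X 2 * quadForm q) + quartForm h)
    {W : Submodule ℂ (Fin 4 → ℂ)} {L : Set P3}
    (hWL : L = {P : P3 | P.submodule ≤ W}) (hLS : L ⊆ zeroSet f)
    {w : Fin 4 → ℂ} (hw : w ∈ W) (hw0 : w ≠ 0) : gval q h w = 0 := by
  have hmem : Projectivization.mk ℂ w hw0 ∈ L := by
    rw [hWL, Set.mem_setOf_eq, Projectivization.submodule_mk,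
      Submodule.span_singleton_le_iff_mem]
    exact hw
  exact (mk_mem_zeroSet_iff hf w hw0).1 (hLS hmem)

/-- Any line contained in `V(f)` through `O` is `{y = z = 0}`. -/
lemma line_through_O
    (hf : f = X 3 ^ 2 * X 2 ^ 2 + X 3 * (X 1 ^ 3 + X 2 * quadForm q) + quartForm h)
    (L : Set P3) (hL : IsLine L) (hLS : L ⊆ zeroSet f) (hO : ptO ∈ L) :
    L = {P : P3 | P.rep 1 = 0 ∧ P.rep 2 = 0} := by
  obtain ⟨W, hW2, hWL⟩ := hL
  -- e₃ ∈ W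
  have he3 : (![0,0,0,1] : Fin 4 → ℂ) ∈ W := by
    have hO' : ptO.rep ∈ W := by
      rw [hWL, lineSet_eq] at hO; exact hO
    obtain ⟨a, ha, hrep⟩ := mk_rep_spec (![0,0,0,1] : Fin 4 → ℂ)
      (by intro hc; simpa using congrFun hc 3)
    rw [show ptO = Projectivization.mk ℂ ![0,0,0,1]
      (by intro hc; simpa using congrFun hc 3) from rfl, hrep] at hO'
    exact (Submodule.smul_mem_iff W ha).1 hO'
  -- find u ∈ W not in span{e₃}
  have hu_ex : ∃ u ∈ W, u ∉ Submodule.span ℂ ({![0,0,0,1]} : Set (Fin 4 → ℂ)) := by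
    by_contra hc
    push_neg at hc
    have hle : W ≤ Submodule.span ℂ ({![0,0,0,1]} : Set (Fin 4 → ℂ)) := hc
    have h1 : Module.finrank ℂ W ≤ 1 := by
      have := Submodule.finrank_mono hle
      rwa [finrank_span_singleton (by intro hc'; simpa using congrFun hc' 3)] at this
    omega
  obtain ⟨u, huW, huns⟩ := hu_ex
  have hune : u ≠ 0 := by rintro rfl; exact huns (Submodule.zero_mem _)
  have hli : LinearIndependent ℂ ![(![0,0,0,1] : Fin 4 → ℂ), u] := by
    rw [LinearIndependent.pair_iff' (by intro hc; simpa using congrFun hc 3)]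
    intro a hc
    exact huns (Submodule.mem_span_singleton.2 ⟨a, hc⟩)
  -- evaluate g along the line
  have E : ∀ t : ℂ, gval q h (u + t • (![0,0,0,1] : Fin 4 → ℂ)) = 0 := by
    intro t
    refine gval_zero_of_mem hf hWL hLS (W.add_mem huW (W.smul_mem t he3)) ?_
    intro hc
    obtain ⟨h1, h2⟩ := LinearIndependent.pair_iff.1 hli t 1 (by
      rw [add_comm] at hc; simpa [add_comm] using hc)
    exact one_ne_zero h2
  have e0 := E 0; have e1 := E 1; have e2 := E (-1)
  simp only [gval, Pi.add_apply, Pi.smul_apply, smul_eq_mul, Matrix.cons_val_zero,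
    Matrix.cons_val_one, Matrix.head_cons, Matrix.cons_val_two, Matrix.cons_val_three,
    Matrix.tail_cons, mul_zero, add_zero, mul_one, zero_add] at e0 e1 e2
  -- coefficient of t²: (u 2)² = 0
  have hc2 : u 2 = 0 := by
    have : (u 2)^2 = 0 := by linear_combination (1/2 : ℂ) * e1 + (1/2 : ℂ) * e2 - e0
    exact pow_eq_zero_iff (by norm_num) |>.1 this
  have hc1 : u 1 = 0 := by
    have : (u 1)^3 = 0 := by
      rw [hc2] at e0 e1
      linear_combination e1 - e0
    exact pow_eq_zero_iff (by norm_num) |>.1 this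
  have hu0 : u 0 ≠ 0 := by
    intro hc
    apply huns
    refine Submodule.mem_span_singleton.2 ⟨u 3, funext fun i => ?_⟩
    fin_cases i
    · show u 3 * 0 = u 0; rw [hc]; ring
    · show u 3 * 0 = u 1; rw [hc1]; ring
    · show u 3 * 0 = u 2; rw [hc2]; ring
    · show u 3 * 1 = u 3; ring
  -- W = span {e₀, e₃}
  have hWeq : W = Submodule.span ℂ ({![1,0,0,0], ![0,0,0,1]} : Set (Fin 4 → ℂ)) := by
    have he0 : (![1,0,0,0] : Fin 4 → ℂ) ∈ W := by
      have : (![1,0,0,0] : Fin 4 → ℂ) = (u 0)⁻¹ • (u + (-(u 3)) • ![0,0,0,1]) := by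
        funext i
        fin_cases i
        · show (1:ℂ) = (u 0)⁻¹ * (u 0 + -(u 3) * 0)
          rw [mul_zero, add_zero, inv_mul_cancel₀ hu0]
        · show (0:ℂ) = (u 0)⁻¹ * (u 1 + -(u 3) * 0); rw [hc1]; ring
        · show (0:ℂ) = (u 0)⁻¹ * (u 2 + -(u 3) * 0); rw [hc2]; ring
        · show (0:ℂ) = (u 0)⁻¹ * (u 3 + -(u 3) * 1); ring
      rw [this]
      exact W.smul_mem _ (W.add_mem huW (W.smul_mem _ he3))
    refine (Submodule.eq_of_le_of_finrank_le ?_ ?_).symm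
    · rw [Submodule.span_le]
      rintro x (rfl | rfl)
      · exact he0
      · exact he3
    · rw [hW2, finrank_span_pair li_e]
  rw [hWL, hWeq, lineSet_eq]
  ext P
  rw [Set.mem_setOf_eq, mem_span_e]
  rfl

lemma line_meets
    (hf : f = X 3 ^ 2 * X 2 ^ 2 + X 3 * (X 1 ^ 3 + X 2 * quadForm q) + quartForm h)
    (h400 : h 4 0 0 = 0) (h310 : h 3 1 0 = 0) (q20 : q 2 0 = 0) (h301 : h 3 0 1 ≠ 0)
    {L : Set P3} {W : Submodule ℂ (Fin 4 → ℂ)}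
    (hW2 : Module.finrank ℂ W = 2) (hWL : L = {P : P3 | P.submodule ≤ W})
    (hLS : L ⊆ zeroSet f)
    (hL0 : L ≠ {P : P3 | P.rep 1 = 0 ∧ P.rep 2 = 0})
    {P : P3} (hPL : P ∈ L) (hP1 : P.rep 1 = 0) (hP2 : P.rep 2 = 0) :
    ∃ u v : Fin 4 → ℂ, W = Submodule.span ℂ ({u, v} : Set (Fin 4 → ℂ)) ∧
      u 1 = 0 ∧ u 2 = 0 ∧ u 0 ≠ 0 ∧ v 1 ≠ 0 ∧ v 2 = 0 ∧
      h 2 2 0 * u 0 ^ 2 * v 1 ^ 2 = 0 ∧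
      u 3 * v 1 ^ 3 + h 1 3 0 * u 0 * v 1 ^ 3 + 2 * h 2 2 0 * u 0 * v 0 * v 1 ^ 2 = 0 ∧
      v 3 * v 1 ^ 3 + h 2 2 0 * v 0 ^ 2 * v 1 ^ 2 + h 1 3 0 * v 0 * v 1 ^ 3
        + h 0 4 0 * v 1 ^ 4 = 0 := by
  set u : Fin 4 → ℂ := P.rep with hu
  have hune : u ≠ 0 := P.rep_nonzero
  have huW : u ∈ W := by
    rw [hWL, lineSet_eq] at hPL; exact hPL
  -- find v ∈ W with (v 1, v 2) ≠ 0
  have hv_ex : ∃ v ∈ W, ¬(v 1 = 0 ∧ v 2 = 0) := by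
    by_contra hc
    push_neg at hc
    have hle : W ≤ Submodule.span ℂ ({![1,0,0,0], ![0,0,0,1]} : Set (Fin 4 → ℂ)) := by
      intro x hx
      rw [mem_span_e]
      exact hc x hx
    have hWeq := Submodule.eq_of_le_of_finrank_le hle
      (by rw [hW2, finrank_span_pair li_e])
    apply hL0
    rw [hWL, hWeq, lineSet_eq]
    ext Q
    rw [Set.mem_setOf_eq, mem_span_e]
    rfl
  obtain ⟨v, hvW, hv12⟩ := hv_ex
  -- linear independence
  have hli : LinearIndependent ℂ ![u, v] := by
    rw [LinearIndependent.pair_iff]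
    intro s t hst
    have h1 := congrFun hst 1
    have h2 := congrFun hst 2
    simp only [Pi.add_apply, Pi.smul_apply, smul_eq_mul, Pi.zero_apply, hP1, hP2, ← hu,
      mul_zero, zero_add] at h1 h2
    have ht : t = 0 := by
      by_contra htne
      exact hv12 ⟨(mul_eq_zero.1 h1).resolve_left htne, (mul_eq_zero.1 h2).resolve_left htne⟩
    subst ht
    refine ⟨?_, rfl⟩
    have : s • u = 0 := by simpa using hst
    exact (smul_eq_zero.1 this).resolve_right hune
  -- u 0 ≠ 0
  have ha : u 0 ≠ 0 := by
    intro hc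
    have hu3 : u 3 ≠ 0 := by
      intro hc3
      apply hune
      funext i
      fin_cases i
      · exact hc
      · exact hP1
      · exact hP2
      · exact hc3
    have hPO : ptO = P := by
      rw [← Projectivization.mk_rep P]
      refine (Projectivization.mk_eq_mk_iff' ℂ _ _ _ _).2 ⟨(u 3)⁻¹, funext fun i => ?_⟩
      fin_cases i
      · show (u 3)⁻¹ * u 0 = 0; rw [hc, mul_zero]
      · show (u 3)⁻¹ * u 1 = 0; rw [hP1, mul_zero]
      · show (u 3)⁻¹ * u 2 = 0; rw [hP2, mul_zero]
      · show (u 3)⁻¹ * u 3 = 1; exact inv_mul_cancel₀ hu3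
    exact hL0 (line_through_O hf L ⟨W, hW2, hWL⟩ hLS (hPO ▸ hPL))
  -- evaluation along the pencil
  have E : ∀ t : ℂ, gval q h (u + t • v) = 0 := by
    intro t
    refine gval_zero_of_mem hf hWL hLS (W.add_mem huW (W.smul_mem t hvW)) ?_
    intro hc
    obtain ⟨h1, _⟩ := LinearIndependent.pair_iff.1 hli 1 t (by simpa using hc)
    exact one_ne_zero h1
  have hu1 : u 1 = 0 := hP1
  have hu2 : u 2 = 0 := hP2
  -- first extraction: coefficient of t
  have hγ : v 2 = 0 := by
    have e1 := E 1; have e2 := E (-1); have e3 := E 2; have e4 := E (-2)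
    simp only [gval, Pi.add_apply, Pi.smul_apply, smul_eq_mul, hu1, hu2, h400, h310,
      q20] at e1 e2 e3 e4
    have hγ0 : h 3 0 1 * u 0 ^ 3 * v 2 = 0 := by
      linear_combination (2/3 : ℂ) * e1 - (2/3 : ℂ) * e2 - (1/12 : ℂ) * e3 + (1/12 : ℂ) * e4
    rcases mul_eq_zero.1 hγ0 with h' | h'
    · rcases mul_eq_zero.1 h' with h'' | h''
      · exact absurd h'' h301
      · exact absurd (pow_eq_zero_iff (by norm_num) |>.1 h'') ha
    · exact h'
  have hβ : v 1 ≠ 0 := fun hc => hv12 ⟨hc, hγ⟩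
  -- second round of extractions with v 2 = 0
  have e1 := E 1; have e2 := E (-1); have e3 := E 2; have e4 := E (-2)
  simp only [gval, Pi.add_apply, Pi.smul_apply, smul_eq_mul, hu1, hu2, hγ, h400, h310,
    q20] at e1 e2 e3 e4
  have hc2 : h 2 2 0 * u 0 ^ 2 * v 1 ^ 2 = 0 := by
    linear_combination (2/3 : ℂ) * e1 + (2/3 : ℂ) * e2 - (1/24 : ℂ) * e3 - (1/24 : ℂ) * e4
  have hc3 : u 3 * v 1 ^ 3 + h 1 3 0 * u 0 * v 1 ^ 3 + 2 * h 2 2 0 * u 0 * v 0 * v 1 ^ 2 = 0 := by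
    linear_combination (-1/6 : ℂ) * e1 + (1/6 : ℂ) * e2 + (1/12 : ℂ) * e3 - (1/12 : ℂ) * e4
  have hvne : v ≠ 0 := fun hc => hβ (by rw [hc]; rfl)
  have hc4' : gval q h v = 0 := gval_zero_of_mem hf hWL hLS hvW hvne
  have hc4 : v 3 * v 1 ^ 3 + h 2 2 0 * v 0 ^ 2 * v 1 ^ 2 + h 1 3 0 * v 0 * v 1 ^ 3
      + h 0 4 0 * v 1 ^ 4 = 0 := by
    simp only [gval, hγ, h400, h310, q20] at hc4'
    linear_combination hc4'
  -- W is the span of u and v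
  have hWeq : W = Submodule.span ℂ ({u, v} : Set (Fin 4 → ℂ)) := by
    refine (Submodule.eq_of_le_of_finrank_le ?_ ?_).symm
    · rw [Submodule.span_le]
      rintro x (rfl | rfl)
      · exact huW
      · exact hvW
    · rw [hW2, finrank_span_pair hli]
  exact ⟨u, v, hWeq, hu1, hu2, ha, hβ, hγ, hc2, hc3, hc4⟩

lemma isLine_w (c d : ℂ) :
    IsLine {P : P3 | P.rep 2 = 0 ∧ c * P.rep 0 + d * P.rep 1 + P.rep 3 = 0} := by
  refine ⟨Submodule.span ℂ ({![1,0,0,-c], ![0,1,0,-d]} : Set (Fin 4 → ℂ)),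
    finrank_span_pair (li_w c d), ?_⟩
  rw [lineSet_eq]
  ext P
  simp only [Set.mem_setOf_eq, mem_span_w]

lemma isLine_e :
    IsLine {P : P3 | P.rep 1 = 0 ∧ P.rep 2 = 0} := by
  refine ⟨Submodule.span ℂ ({![1,0,0,0], ![0,0,0,1]} : Set (Fin 4 → ℂ)),
    finrank_span_pair li_e, ?_⟩
  rw [lineSet_eq]
  ext P
  simp only [Set.mem_setOf_eq, mem_span_e]

theorem Q5_unique_line_through_O
    (q : ℕ → ℕ → ℂ) (h : ℕ → ℕ → ℕ → ℂ)
    (f : MvPolynomial (Fin 4) ℂ)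
    (hf : f = X 3 ^ 2 * X 2 ^ 2 + X 3 * (X 1 ^ 3 + X 2 * quadForm q) + quartForm h)
    (h400 : h 4 0 0 = 0) (h310 : h 3 1 0 = 0) (q20 : q 2 0 = 0) (h301 : h 3 0 1 ≠ 0)
    (hiso : IsIsolatedPtOf ptO {Q : P3 | IsSingPt f Q})
    (ℓ₀ : Set P3) (hℓ₀ : ℓ₀ = {P : P3 | P.rep 1 = 0 ∧ P.rep 2 = 0})
    (ℓ₁ : Set P3)
    (hℓ₁ : ℓ₁ = {P : P3 | P.rep 2 = 0 ∧
      h 1 3 0 * P.rep 0 + h 0 4 0 * P.rep 1 + P.rep 3 = 0}) :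
    IsLine ℓ₀ ∧ ℓ₀ ⊆ zeroSet f ∧ ptO ∈ ℓ₀ ∧
      (∀ L : Set P3, IsLine L → L ⊆ zeroSet f → ptO ∈ L → L = ℓ₀) ∧
      (h 2 2 0 ≠ 0 → ∀ L : Set P3, IsLine L → L ⊆ zeroSet f → L ≠ ℓ₀ → L ∩ ℓ₀ = ∅) ∧
      (h 2 2 0 = 0 →
        {L : Set P3 | IsLine L ∧ L ⊆ zeroSet f ∧ L ≠ ℓ₀ ∧ (L ∩ ℓ₀).Nonempty} = {ℓ₁}) := by
  subst hℓ₀ hℓ₁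
  refine ⟨isLine_e, ?_, ?_, ?_, ?_, ?_⟩
  · -- ℓ₀ ⊆ zeroSet f
    intro P hP
    show eval P.rep f = 0
    rw [eval_eq_gval hf]
    simp only [gval, hP.1, hP.2]
    linear_combination (P.rep 0)^4 * h400
  · -- ptO ∈ ℓ₀
    obtain ⟨a, ha, hrep⟩ := mk_rep_spec (![0,0,0,1] : Fin 4 → ℂ)
      (by intro hc; simpa using congrFun hc 3)
    have : ptO.rep = a • ![0,0,0,1] := hrep
    constructor
    · rw [this]; simp
    · rw [this]; simp
  · -- uniqueness through O
    intro L hL hLS hO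
    exact line_through_O hf L hL hLS hO
  · -- h220 ≠ 0 case
    intro h220 L hL hLS hne
    rw [Set.eq_empty_iff_forall_notMem]
    rintro P ⟨hPL, hP1, hP2⟩
    obtain ⟨W, hW2, hWL⟩ := hL
    obtain ⟨u, v, -, -, -, ha, hβ, -, hc2, -, -⟩ :=
      line_meets hf h400 h310 q20 h301 hW2 hWL hLS hne hPL hP1 hP2
    rcases mul_eq_zero.1 hc2 with h' | h'
    · rcases mul_eq_zero.1 h' with h'' | h''
      · exact h220 h''
      · exact ha (pow_eq_zero_iff (by norm_num) |>.1 h'')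
    · exact hβ (pow_eq_zero_iff (by norm_num) |>.1 h')
  · -- h220 = 0 case
    intro h220
    ext L
    simp only [Set.mem_setOf_eq, Set.mem_singleton_iff]
    constructor
    · rintro ⟨hL, hLS, hne, P, hPL, hP1, hP2⟩
      obtain ⟨W, hW2, hWL⟩ := hL
      obtain ⟨u, v, hWeq, hu1, hu2, ha, hβ, hγ, -, hc3, hc4⟩ :=
        line_meets hf h400 h310 q20 h301 hW2 hWL hLS hne hPL hP1 hP2
      have hβ3 : v 1 ^ 3 ≠ 0 := pow_ne_zero 3 hβ
      have hd : h 1 3 0 * u 0 + h 0 4 0 * u 1 + u 3 = 0 := by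
        have hz : (u 3 + h 1 3 0 * u 0) * v 1 ^ 3 = 0 := by
          linear_combination hc3 - 2 * u 0 * v 0 * v 1 ^ 2 * h220
        have := (mul_eq_zero.1 hz).resolve_right hβ3
        rw [hu1]
        linear_combination this
      have hδ : h 1 3 0 * v 0 + h 0 4 0 * v 1 + v 3 = 0 := by
        have hz : (v 3 + h 1 3 0 * v 0 + h 0 4 0 * v 1) * v 1 ^ 3 = 0 := by
          linear_combination hc4 - v 0 ^ 2 * v 1 ^ 2 * h220
        have := (mul_eq_zero.1 hz).resolve_right hβ3
        linear_combination this
      have hle : Submodule.span ℂ ({u, v} : Set (Fin 4 → ℂ)) ≤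
          Submodule.span ℂ ({![1,0,0,-(h 1 3 0)], ![0,1,0,-(h 0 4 0)]} : Set (Fin 4 → ℂ)) := by
        rw [Submodule.span_le]
        rintro x (rfl | rfl)
        · exact (mem_span_w _ _ _).2 ⟨hu2, hd⟩
        · exact (mem_span_w _ _ _).2 ⟨hγ, hδ⟩
      have heq : Submodule.span ℂ ({u, v} : Set (Fin 4 → ℂ)) =
          Submodule.span ℂ ({![1,0,0,-(h 1 3 0)], ![0,1,0,-(h 0 4 0)]} : Set (Fin 4 → ℂ)) := by
        refine Submodule.eq_of_le_of_finrank_le hle ?_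
        rw [finrank_span_pair (li_w _ _), ← hWeq, hW2]
      rw [hWL, hWeq, heq, lineSet_eq]
      ext Q
      rw [Set.mem_setOf_eq, mem_span_w]
      rfl
    · rintro rfl
      have hw1ne : (![1,0,0,-(h 1 3 0)] : Fin 4 → ℂ) ≠ 0 := by
        intro hc; simpa using congrFun hc 0
      have hw2ne : (![0,1,0,-(h 0 4 0)] : Fin 4 → ℂ) ≠ 0 := by
        intro hc; simpa using congrFun hc 1
      obtain ⟨a1, ha1, hrep1⟩ := mk_rep_spec _ hw1ne
      obtain ⟨a2, ha2, hrep2⟩ := mk_rep_spec _ hw2ne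
      refine ⟨isLine_w _ _, ?_, ?_, ?_⟩
      · -- ℓ₁ ⊆ zeroSet f
        intro P hP
        show eval P.rep f = 0
        rw [eval_eq_gval hf]
        simp only [gval, hP.1]
        linear_combination (P.rep 1)^3 * hP.2 + (P.rep 0)^2 * (P.rep 1)^2 * h220
          + (P.rep 0)^3 * (P.rep 1) * h310 + (P.rep 0)^4 * h400
      · -- ℓ₁ ≠ ℓ₀
        intro hc
        have hmem : Projectivization.mk ℂ _ hw2ne ∈
            {P : P3 | P.rep 2 = 0 ∧
              h 1 3 0 * P.rep 0 + h 0 4 0 * P.rep 1 + P.rep 3 = 0} := by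
          constructor
          · rw [hrep2]; simp
          · rw [hrep2]; simp; ring
        rw [hc] at hmem
        have h1 := hmem.1
        rw [hrep2] at h1
        simp at h1
        exact ha2 h1
      · -- nonempty intersection
        refine ⟨Projectivization.mk ℂ _ hw1ne, ⟨?_, ?_⟩, ?_, ?_⟩
        · rw [hrep1]; simp
        · rw [hrep1]; simp; ring
        · rw [hrep1]; simp
        · rw [hrep1]; simp
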